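/- arXiv:2105.03993 — 4 statements merged into one kernel-verified Lean document; each statement's English description precedes it below -/
import Mathlib

section
/- Let Ω be a measurable space, μ a probability measure on Ω, and κ a Markov kernel from Ω to ℝ such that for μ-almost every ω the measure κ(ω) has no atoms. Define the one-sided prior-predictive replication p-value as the map p(ω, t) = κ(ω)([t, ∞)) on Ω × ℝ. Then the pushforward of the composition measure μ ⊗ κ (the joint law of (ω, t) with ω ~ μ and t ~ κ(ω)) under p is the uniform (Lebesgue) probability measure on the interval [0, 1]. (Proposition 1: prior-predictive replication p-values are uniformly distributed on [0,1] under the assumed reference reproducible model.) -/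
/-!
For fixed `ω`, the p-value is the survival function `S t = κ ω [t, ∞)` of an atomless law, so
`S` is continuous and antitone, tends to `1` at `-∞` and to `0` at `+∞`, and
`κ ω [a, ∞) = κ ω (a, ∞) = S a`. For `0 ≤ x < y < 1` pick `a`, `b` with `S a = x`, `S b = y`;
then `[a, ∞) ⊆ {S ≤ x} ⊆ (b, ∞)`, so `x ≤ κ ω {S ≤ x} ≤ y`, and letting `y ↓ x` the law of `S`
under `κ ω` is uniform on `[0, 1]` (probability integral transform). Since this conditional law
does not depend on `ω`, it is also the law of the p-value under `μ ⊗ₘ κ`.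
-/

open MeasureTheory ProbabilityTheory Set
open scoped ProbabilityTheory

lemma MeasureTheory.antitone_measureReal_Ici (ν : Measure ℝ) [IsFiniteMeasure ν] :
    Antitone fun t => ν.real (Ici t) :=
  fun _ _ h => measureReal_mono (Ici_subset_Ici.2 h)

lemma ProbabilityTheory.Kernel.measurable_measureReal_Ici {Ω : Type*} [MeasurableSpace Ω]
    (κ : Kernel Ω ℝ) [IsSFiniteKernel κ] : Measurable fun p : Ω × ℝ => (κ p.1).real (Ici p.2) :=
  (Kernel.measurable_kernel_prodMk_left (κ := κ.prodMkRight ℝ)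
    (measurableSet_le measurable_fst.snd measurable_snd)).ennreal_toReal

lemma MeasureTheory.Measure.map_compProd_eq_of_ae_map_eq {α β γ : Type*} [MeasurableSpace α]
    [MeasurableSpace β] [MeasurableSpace γ] {μ : Measure α} [IsProbabilityMeasure μ]
    {κ : Kernel α β} [IsSFiniteKernel κ] {f : α × β → γ} (hf : Measurable f) {ρ : Measure γ}
    (h : ∀ᵐ a ∂μ, (κ a).map (fun b => f (a, b)) = ρ) : (μ ⊗ₘ κ).map f = ρ := by
  ext s hs
  rw [Measure.map_apply hf hs, Measure.compProd_apply (hf hs)]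
  calc ∫⁻ a, κ a (Prod.mk a ⁻¹' (f ⁻¹' s)) ∂μ = ∫⁻ _, ρ s ∂μ := by
        refine lintegral_congr_ae ?_
        filter_upwards [h] with a ha
        rw [← ha, Measure.map_apply (by fun_prop) hs]
        rfl
    _ = ρ s := by simp

namespace ProbabilityTheory

variable {ν : Measure ℝ} [IsProbabilityMeasure ν] [NullSingletonClass ν]

lemma continuous_cdf : Continuous (cdf ν) := by
  refine continuous_iff_continuousAt.2 fun x =>
    (monotone_cdf ν).continuousAt_iff_leftLim_eq_rightLim.2 ?_
  have hjump : ENNReal.ofReal (cdf ν x - Function.leftLim (cdf ν) x) = 0 := by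
    rw [← StieltjesFunction.measure_singleton, measure_cdf, measure_singleton (μ := ν)]
  rw [(cdf ν).rightLim_eq]
  exact le_antisymm ((monotone_cdf ν).leftLim_le le_rfl) (by simpa [sub_nonpos] using hjump)

lemma exists_cdf_eq {y : ℝ} (hy : y ∈ Ioo 0 1) : ∃ a, cdf ν a = y :=
  mem_range_of_exists_le_of_exists_ge continuous_cdf
    (((tendsto_cdf_atBot ν).eventually_lt_const hy.1).exists.imp fun _ => le_of_lt)
    (((tendsto_cdf_atTop ν).eventually_const_lt hy.2).exists.imp fun _ => le_of_lt)

lemma measureReal_Ici_eq_one_sub_cdf (t : ℝ) : ν.real (Ici t) = 1 - cdf ν t := by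
  rw [← measureReal_congr Ioi_ae_eq_Ici, ← compl_Iic,
    probReal_compl_eq_one_sub measurableSet_Iic, cdf_eq_real]

lemma exists_measureReal_Ici_eq {y : ℝ} (hy : y ∈ Ioo 0 1) : ∃ a, ν.real (Ici a) = y := by
  obtain ⟨a, ha⟩ := exists_cdf_eq (ν := ν) (y := 1 - y) ⟨by linarith [hy.2], by linarith [hy.1]⟩
  exact ⟨a, by rw [measureReal_Ici_eq_one_sub_cdf, ha, sub_sub_cancel]⟩

lemma measureReal_preimage_Iic_measureReal_Ici {x : ℝ} (hx : x ∈ Ico 0 1) :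
    ν.real ((fun t => ν.real (Ici t)) ⁻¹' Iic x) = x := by
  have hS := antitone_measureReal_Ici ν
  refine le_antisymm (le_of_forall_gt_imp_ge_of_dense fun y hxy => ?_) ?_
  · rcases lt_or_ge y 1 with hy1 | hy1
    · obtain ⟨b, hb⟩ := exists_measureReal_Ici_eq (ν := ν) ⟨hx.1.trans_lt hxy, hy1⟩
      calc _ ≤ ν.real (Ioi b) := measureReal_mono fun t ht =>
            not_le.1 fun htb => (hxy.trans_le (hb ▸ hS htb)).not_ge ht
        _ = y := by rw [measureReal_congr Ioi_ae_eq_Ici, hb]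
    · exact measureReal_le_one.trans hy1
  · rcases hx.1.eq_or_lt with rfl | hx0
    · exact measureReal_nonneg
    · obtain ⟨a, ha⟩ := exists_measureReal_Ici_eq (ν := ν) ⟨hx0, hx.2⟩
      calc x = ν.real (Ici a) := ha.symm
        _ ≤ _ := measureReal_mono fun t ht => (hS ht).trans ha.le

theorem map_measureReal_Ici_eq_volume_restrict_Icc :
    ν.map (fun t => ν.real (Ici t)) = volume.restrict (Icc (0 : ℝ) 1) := by
  refine Measure.ext_of_Iic _ _ fun x => ?_
  rw [Measure.map_apply (antitone_measureReal_Ici ν).measurable measurableSet_Iic,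
    Measure.restrict_apply measurableSet_Iic]
  rcases lt_or_ge x 0 with hx0 | hx0
  · have : (fun t => ν.real (Ici t)) ⁻¹' Iic x = ∅ :=
      eq_empty_of_forall_notMem fun t ht => (measureReal_nonneg.trans ht).not_gt hx0
    have hunif : Iic x ∩ Icc (0 : ℝ) 1 = ∅ :=
      eq_empty_of_forall_notMem fun t ht => (ht.2.1.trans ht.1).not_gt hx0
    rw [this, hunif, measure_empty, measure_empty]
  rcases lt_or_ge x 1 with hx1 | hx1
  · have hunif : Iic x ∩ Icc (0 : ℝ) 1 = Icc 0 x := by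
      ext t
      simp only [mem_inter_iff, mem_Iic, mem_Icc]
      grind
    rw [← ofReal_measureReal, measureReal_preimage_Iic_measureReal_Ici ⟨hx0, hx1⟩, hunif,
      Real.volume_Icc, sub_zero]
  · have : (fun t => ν.real (Ici t)) ⁻¹' Iic x = univ :=
      eq_univ_of_forall fun t => measureReal_le_one.trans hx1
    have hunif : Iic x ∩ Icc (0 : ℝ) 1 = Icc 0 1 := inter_eq_right.2 fun t ht => ht.2.trans hx1
    rw [this, hunif, measure_univ, Real.volume_Icc, sub_zero, ENNReal.ofReal_one]

end ProbabilityTheory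

/-- **Proposition 1 (one-sided).** If `μ` is a probability measure on `Ω` and `κ` a Markov
kernel from `Ω` to `ℝ` such that `κ ω` has no atoms for `μ`-almost every `ω`, then the
one-sided prior-predictive replication p-value `p (ω, t) = κ ω [t, ∞)`, viewed as a map on
`Ω × ℝ` equipped with the composition measure `μ ⊗ₘ κ`, is uniformly distributed on `[0, 1]`. -/
theorem prior_prp_one_sided_uniform {Ω : Type*} [MeasurableSpace Ω]
    (μ : Measure Ω) [IsProbabilityMeasure μ]
    (κ : Kernel Ω ℝ) [IsMarkovKernel κ]
    (hNoAtoms : ∀ᵐ ω ∂μ, ∀ t : ℝ, κ ω {t} = 0) :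
    (μ ⊗ₘ κ).map (fun p : Ω × ℝ => ((κ p.1) (Set.Ici p.2)).toReal)
      = volume.restrict (Set.Icc (0 : ℝ) 1) := by
  refine Measure.map_compProd_eq_of_ae_map_eq (Kernel.measurable_measureReal_Ici κ) ?_
  filter_upwards [hNoAtoms] with ω hω
  have : NullSingletonClass (κ ω) := ⟨hω⟩
  exact map_measureReal_Ici_eq_volume_restrict_Icc
end

section
/- Let ν be a probability measure on ℝ whose cumulative distribution function F_ν(t) = ν((-∞, t]) is continuous and strictly increasing on ℝ, and let q_ν(β) = sInf {t : F_ν(t) ≥ β} denote its β-quantile for β ∈ (0, 1). Then for every α ∈ (0, 1) and every t ∈ ℝ: t does not lie in the open interval (q_ν(α/2), q_ν(1 − α/2)) if and only if 2 · min{F_ν(t), 1 − F_ν(t)} ≤ α. (Proposition 2: the replication statistic falls outside the central (1−α) predictive interval iff the corresponding two-sided prior-predictive replication p-value is at most α.) -/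
/-!
A continuous CDF tending to `0` and `1` attains every level `β ∈ (0, 1)`, and strict monotonicity
makes `{s | β ≤ F s}` the ray `[q, ∞)` with `F q = β`; so the quantile `q(β)` is the exact inverse
`F⁻¹(β)`. Applying `F` then turns `t ∉ (q(α/2), q(1 - α/2))` into `F t ∉ (α/2, 1 - α/2)`,
which is `2 · min (F t) (1 - F t) ≤ α`.
-/

open MeasureTheory ProbabilityTheory Filter Topology Set

theorem exists_eq_of_tendsto_atBot_atTop {F : ℝ → ℝ} {a b β : ℝ} (hF : Continuous F)
    (hbot : Tendsto F atBot (𝓝 a)) (htop : Tendsto F atTop (𝓝 b)) (hβ : β ∈ Ioo a b) :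
    ∃ q, F q = β :=
  mem_range_of_exists_le_of_exists_ge hF
    ((hbot.eventually (eventually_lt_nhds hβ.1)).exists.imp fun _ h => h.le)
    ((htop.eventually (eventually_gt_nhds hβ.2)).exists.imp fun _ h => h.le)

theorem StrictMono.sInf_setOf_le_eq {F : ℝ → ℝ} {q β : ℝ} (hF : StrictMono F) (hq : F q = β) :
    sInf {s | β ≤ F s} = q := by
  simp only [← hq, hF.le_iff_le]
  exact csInf_Ici

theorem notMem_Ioo_half_iff_two_mul_min_le (x α : ℝ) :
    x ∉ Ioo (α / 2) (1 - α / 2) ↔ 2 * min x (1 - x) ≤ α := by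
  rw [mem_Ioo, not_and_or, not_lt, not_lt]
  constructor
  · rintro (h | h)
    · linarith [min_le_left x (1 - x)]
    · linarith [min_le_right x (1 - x)]
  · intro h
    by_contra! hx
    rcases min_cases x (1 - x) with ⟨hm, _⟩ | ⟨hm, _⟩ <;> linarith

/-- **Proposition 2.** Let `ν` be a probability measure on `ℝ` with continuous and strictly
increasing CDF `F ν t = ν (-∞, t]`, and let `q β = sInf {t | F ν t ≥ β}` be its `β`-quantile.
Then for every `α ∈ (0,1)` and every `t : ℝ`, the observation `t` lies outside the central
`(1 - α)` predictive interval `(q (α/2), q (1 - α/2))` if and only if the two-sided p-value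
`2 * min (F ν t) (1 - F ν t)` is at most `α`. -/
theorem interval_check_iff_two_sided_prp (ν : Measure ℝ) [IsProbabilityMeasure ν]
    (hcont : Continuous fun t : ℝ => (ν (Set.Iic t)).toReal)
    (hmono : StrictMono fun t : ℝ => (ν (Set.Iic t)).toReal)
    (α : ℝ) (hα : α ∈ Set.Ioo (0 : ℝ) 1) (t : ℝ) :
    t ∉ Set.Ioo (sInf {s : ℝ | α / 2 ≤ (ν (Set.Iic s)).toReal})
        (sInf {s : ℝ | 1 - α / 2 ≤ (ν (Set.Iic s)).toReal})
      ↔ 2 * min ((ν (Set.Iic t)).toReal) (1 - (ν (Set.Iic t)).toReal) ≤ α := by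
  have hF : (fun t : ℝ => (ν (Set.Iic t)).toReal) = cdf ν := funext fun x => (cdf_eq_real ν x).symm
  have hquantile : ∀ β ∈ Ioo (0 : ℝ) 1, ∃ q, (ν (Set.Iic q)).toReal = β := fun β hβ =>
    exists_eq_of_tendsto_atBot_atTop hcont (hF ▸ tendsto_cdf_atBot ν) (hF ▸ tendsto_cdf_atTop ν) hβ
  obtain ⟨q₁, hq₁⟩ := hquantile (α / 2) ⟨by linarith [hα.1], by linarith [hα.2]⟩
  obtain ⟨q₂, hq₂⟩ := hquantile (1 - α / 2) ⟨by linarith [hα.2], by linarith [hα.1]⟩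
  rw [hmono.sInf_setOf_le_eq hq₁, hmono.sInf_setOf_le_eq hq₂,
    ← notMem_Ioo_half_iff_two_mul_min_le, ← hq₂, ← hq₁]
  simp only [mem_Ioo, hmono.lt_iff_lt]
end

section
/- Let Ω be a measurable space, μ a probability measure on Ω, and κ a Markov kernel from Ω to ℝ such that for μ-almost every ω the cumulative distribution function of κ(ω) is continuous and strictly increasing on ℝ. For β ∈ (0,1) write q_ω(β) = sInf {t : κ(ω)((-∞, t]) ≥ β}. Then for every α ∈ (0, 1), the composition measure μ ⊗ κ assigns probability exactly α to the set {(ω, t) : t ∉ (q_ω(α/2), q_ω(1 − α/2))}; i.e., under the reference reproducible model the replication statistic falls outside the central (1−α) predictive interval with probability exactly α. (Corollary of Propositions 1 and 2.) -/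
/-!
For a continuous cdf `F` of `ν` and `β ∈ (0, 1)`, the quantile satisfies
`F (quantile ν β) = β` and `ν` has no atoms, so the complement of the central interval has `ν`-mass
`α / 2 + (1 - (1 - α / 2)) = α`. Under the hypothesis this holds for `μ`-a.e. fibre `κ ω`, and
the quantiles depend measurably on `ω` (`quantile β < x` is witnessed by a rational), so the
composition `μ ⊗ₘ κ` integrates the constant `α` against the probability measure `μ`.
-/

open MeasureTheory ProbabilityTheory Set

namespace ProbabilityTheory

/-- Outside `(0, 1)` the set can be empty or unbounded below, and then `sInf` is the junk `0`. -/
noncomputable def quantile (ν : Measure ℝ) (β : ℝ) : ℝ := sInf {t | β ≤ cdf ν t}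

noncomputable def centralInterval (ν : Measure ℝ) (α : ℝ) : Set ℝ :=
  Ioo (quantile ν (α / 2)) (quantile ν (1 - α / 2))

lemma coe_cdf_eq_toReal (ν : Measure ℝ) [IsProbabilityMeasure ν] :
    ⇑(cdf ν) = fun t => (ν (Iic t)).toReal :=
  funext (cdf_eq_real ν)

lemma sInf_le_toReal_measure_Iic_eq_quantile (ν : Measure ℝ) [IsProbabilityMeasure ν]
    (β : ℝ) :
    sInf {t | β ≤ (ν (Iic t)).toReal} = quantile ν β := by
  rw [quantile, coe_cdf_eq_toReal]

section Quantile

variable {ν : Measure ℝ} {β : ℝ}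

lemma nonempty_setOf_le_cdf (hβ : β < 1) : {t | β ≤ cdf ν t}.Nonempty :=
  ((tendsto_cdf_atTop ν).eventually_const_le hβ).exists

lemma bddBelow_setOf_le_cdf (hβ : 0 < β) : BddBelow {t | β ≤ cdf ν t} := by
  obtain ⟨b, hb⟩ := ((tendsto_cdf_atBot ν).eventually_lt_const hβ).exists_forall_of_atBot
  refine ⟨b, fun t ht => le_of_not_gt fun htb => ?_⟩
  exact (hb t htb.le).not_ge ht

lemma quantile_lt_iff (hβ₀ : 0 < β) (hβ₁ : β < 1) {x : ℝ} :
    quantile ν β < x ↔ ∃ r : ℚ, (r : ℝ) < x ∧ β ≤ cdf ν r := by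
  rw [quantile, csInf_lt_iff (bddBelow_setOf_le_cdf hβ₀) (nonempty_setOf_le_cdf hβ₁)]
  constructor
  · rintro ⟨t, ht, htx⟩
    obtain ⟨r, htr, hrx⟩ := exists_rat_btwn htx
    exact ⟨r, hrx, ht.trans (monotone_cdf ν htr.le)⟩
  · rintro ⟨r, hrx, hr⟩
    exact ⟨r, hr, hrx⟩

lemma cdf_quantile (hc : Continuous (cdf ν)) (hβ₀ : 0 < β) (hβ₁ : β < 1) :
    cdf ν (quantile ν β) = β := by
  refine le_antisymm ?_ ?_
  · refine le_of_tendsto (hc.tendsto _ |>.mono_left nhdsWithin_le_nhds)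
      (eventually_nhdsWithin_of_forall (s := Iio (quantile ν β)) fun t ht => ?_)
    exact (not_le.1 <|
      notMem_of_lt_csInf (s := {t | β ≤ cdf ν t}) ht (bddBelow_setOf_le_cdf hβ₀)).le
  · exact (isClosed_le continuous_const hc).csInf_mem (nonempty_setOf_le_cdf hβ₁)
      (bddBelow_setOf_le_cdf hβ₀)

lemma measure_Ioo_of_continuous_cdf [IsProbabilityMeasure ν] (hc : Continuous (cdf ν))
    (a b : ℝ) : ν (Ioo a b) = ENNReal.ofReal (cdf ν b - cdf ν a) := by
  conv_lhs => rw [← measure_cdf ν]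
  rw [StieltjesFunction.measure_Ioo, hc.continuousWithinAt.leftLim_eq]

lemma measure_compl_centralInterval [IsProbabilityMeasure ν] (hc : Continuous (cdf ν))
    {α : ℝ} (hα : α ∈ Ioo (0 : ℝ) 1) :
    ν (centralInterval ν α)ᶜ = ENNReal.ofReal α := by
  obtain ⟨hα₀, hα₁⟩ := hα
  rw [centralInterval, prob_compl_eq_one_sub measurableSet_Ioo, measure_Ioo_of_continuous_cdf hc,
    cdf_quantile hc (by linarith) (by linarith), cdf_quantile hc (by linarith) (by linarith),
    ← ENNReal.ofReal_one, ← ENNReal.ofReal_sub _ (by linarith)]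
  ring_nf

end Quantile

lemma measurable_quantile {Ω : Type*} [MeasurableSpace Ω] (κ : Kernel Ω ℝ) [IsMarkovKernel κ]
    {β : ℝ} (hβ₀ : 0 < β) (hβ₁ : β < 1) :
    Measurable fun ω => quantile (κ ω) β := by
  refine measurable_of_Iio fun x => ?_
  have hpre : (fun ω => quantile (κ ω) β) ⁻¹' Iio x
      = ⋃ r : ℚ, {ω | (r : ℝ) < x ∧ β ≤ (κ ω (Iic (r : ℝ))).toReal} := by
    ext ω
    simp only [mem_preimage, mem_Iio, quantile_lt_iff hβ₀ hβ₁, coe_cdf_eq_toReal, mem_iUnion,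
      mem_ofPred_eq]
  rw [hpre]
  exact .iUnion fun r => (MeasurableSet.const _).inter <|
    measurableSet_le measurable_const (κ.measurable_coe measurableSet_Iic).ennreal_toReal

end ProbabilityTheory

/-- **Corollary of Propositions 1 and 2.** If `μ` is a probability measure on `Ω` and `κ` a
Markov kernel from `Ω` to `ℝ` such that for `μ`-almost every `ω` the CDF of `κ ω` is continuous
and strictly increasing, then under the composition measure `μ ⊗ₘ κ` the replication statistic
falls outside the central `(1 - α)` predictive interval with probability exactly `α`. -/
theorem prob_outside_central_interval {Ω : Type*} [MeasurableSpace Ω]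
    (μ : Measure Ω) [IsProbabilityMeasure μ]
    (κ : Kernel Ω ℝ) [IsMarkovKernel κ]
    (hCDF : ∀ᵐ ω ∂μ, Continuous (fun t : ℝ => ((κ ω) (Set.Iic t)).toReal) ∧
        StrictMono (fun t : ℝ => ((κ ω) (Set.Iic t)).toReal))
    (α : ℝ) (hα : α ∈ Set.Ioo (0 : ℝ) 1) :
    (μ ⊗ₘ κ) {p : Ω × ℝ |
        p.2 ∉ Set.Ioo (sInf {s : ℝ | α / 2 ≤ ((κ p.1) (Set.Iic s)).toReal})
          (sInf {s : ℝ | 1 - α / 2 ≤ ((κ p.1) (Set.Iic s)).toReal})}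
      = ENNReal.ofReal α := by
  obtain ⟨hα₀, hα₁⟩ := hα
  simp only [sInf_le_toReal_measure_Iic_eq_quantile]
  change (μ ⊗ₘ κ) {p : Ω × ℝ | p.2 ∈ (centralInterval (κ p.1) α)ᶜ} = _
  have hlo := measurable_quantile κ (β := α / 2) (by linarith) (by linarith)
  have hhi := measurable_quantile κ (β := 1 - α / 2) (by linarith) (by linarith)
  have hmeas : MeasurableSet {p : Ω × ℝ | p.2 ∈ (centralInterval (κ p.1) α)ᶜ} :=
    ((measurableSet_lt (hlo.comp measurable_fst) measurable_snd).inter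
      (measurableSet_lt measurable_snd (hhi.comp measurable_fst))).compl
  rw [Measure.compProd_apply hmeas]
  have hfiber : ∀ᵐ ω ∂μ, κ ω (centralInterval (κ ω) α)ᶜ = ENNReal.ofReal α := by
    filter_upwards [hCDF] with ω hω
    rw [← coe_cdf_eq_toReal] at hω
    exact measure_compl_centralInterval hω.1 ⟨hα₀, hα₁⟩
  refine (lintegral_congr_ae hfiber).trans ?_
  rw [lintegral_const, measure_univ, mul_one]
end

section
/- Let ω > 0 and φ > 0, and set γ = φ² / (φ² + ω²). Let B and H be independent real random variables with B distributed as the Gaussian measure on ℝ with mean 0 and variance ω², and H distributed as the Gaussian measure with mean 0 and variance φ². Then the probability that B + H has the same sign as B (i.e., P((B + H) · B > 0)) equals √(2/π) · ∫₀^∞ Φ(√((1 − γ)/γ) · ξ) · e^{−ξ²/2} dξ, where Φ is the cumulative distribution function of the standard normal distribution. (Equation (2): the sign-consistency probability under the directional consistency criterion.) -/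
/-!
Conditionally on `B = b ≠ 0`, the event `(b + H) b > 0` says that `H` lies on the same side of
`-b` as `0`, which by the symmetry of `N(0, φ²)` has probability `Φ(|b| / φ)`. Integrating over
`B ~ N(0, ω²)`, the even integrand folds onto the half line, and the substitution `b = ω ξ` turns
`|b| / φ` into `(ω / φ) ξ = √((1 - γ) / γ) ξ`.
-/

open MeasureTheory ProbabilityTheory Real

/-- The CDF `Φ` of the standard normal distribution `N(0,1)`. -/
noncomputable def stdNormalCDF (x : ℝ) : ℝ :=
  ((gaussianReal 0 1) (Set.Iic x)).toReal

open Set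
open scoped NNReal

/- The variances `⟨ω ^ 2, _⟩` of the statement are elaborated in `{r : ℝ // 0 ≤ r}`, which instance
search does not unfold to `ℝ≥0`. -/
instance isProbabilityMeasure_gaussianReal_mk (m a : ℝ) (ha : 0 ≤ a) :
    IsProbabilityMeasure (gaussianReal m ⟨a, ha⟩) :=
  instIsProbabilityMeasureGaussianReal m _

lemma monotone_stdNormalCDF : Monotone stdNormalCDF := fun _ _ hxy =>
  ENNReal.toReal_mono (measure_ne_top _ _) (measure_mono (Iic_subset_Iic.2 hxy))

lemma stdNormalCDF_nonneg (x : ℝ) : 0 ≤ stdNormalCDF x := ENNReal.toReal_nonneg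

lemma mk_sq_ne_zero {σ : ℝ} (hσ : σ ≠ 0) : (⟨σ ^ 2, sq_nonneg σ⟩ : ℝ≥0) ≠ 0 := by
  simp [hσ]

lemma gaussianReal_zero_sq_eq_map (σ : ℝ) :
    gaussianReal 0 ⟨σ ^ 2, sq_nonneg σ⟩ = (gaussianReal 0 1).map (σ * ·) := by
  rw [gaussianReal_map_const_mul, mul_zero, mul_one]
  rfl

lemma gaussianReal_zero_sq_Iic {σ : ℝ} (hσ : 0 < σ) (x : ℝ) :
    gaussianReal 0 ⟨σ ^ 2, sq_nonneg σ⟩ (Iic x) = ENNReal.ofReal (stdNormalCDF (x / σ)) := by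
  rw [gaussianReal_zero_sq_eq_map, Measure.map_apply (measurable_const_mul σ) measurableSet_Iic,
    preimage_const_mul_Iic₀ _ hσ, stdNormalCDF, ENNReal.ofReal_toReal (measure_ne_top _ _)]

lemma gaussianReal_zero_Ioi_neg {v : ℝ≥0} (hv : v ≠ 0) (x : ℝ) :
    gaussianReal 0 v (Ioi (-x)) = gaussianReal 0 v (Iic x) := by
  have := nullSingletonClass_gaussianReal (μ := 0) hv
  conv_lhs => rw [← neg_zero, ← gaussianReal_map_neg]
  rw [Measure.map_apply measurable_neg measurableSet_Ioi, neg_preimage, neg_Ioi, neg_neg,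
    measure_congr Iio_ae_eq_Iic]

lemma gaussianReal_zero_sign_consistent {v : ℝ≥0} (hv : v ≠ 0) {b : ℝ} (hb : b ≠ 0) :
    gaussianReal 0 v {h | 0 < (b + h) * b} = gaussianReal 0 v (Iic |b|) := by
  have := nullSingletonClass_gaussianReal (μ := 0) hv
  rcases hb.lt_or_gt with hb | hb
  · have hset : {h | 0 < (b + h) * b} = Iio (-b) := by
      ext h; simp [mul_pos_iff, hb, hb.not_gt, lt_neg_iff_add_neg']
    rw [hset, measure_congr Iio_ae_eq_Iic, abs_of_neg hb]
  · have hset : {h | 0 < (b + h) * b} = Ioi (-b) := by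
      ext h; simp [hb, neg_lt_iff_pos_add']
    rw [hset, gaussianReal_zero_Ioi_neg hv, abs_of_pos hb]

lemma integral_comp_abs_gaussianReal_zero_one (f : ℝ → ℝ) :
    ∫ x, f |x| ∂gaussianReal 0 1 = √(2 / π) * ∫ ξ in Ioi 0, f ξ * exp (-ξ ^ 2 / 2) := by
  have hpdf (x : ℝ) : gaussianPDFReal 0 1 x = (√(2 * π))⁻¹ * exp (-|x| ^ 2 / 2) := by
    simp [gaussianPDFReal]
  have hconst : √(2 / π) = 2 * (√(2 * π))⁻¹ := by
    rw [show (2 : ℝ) / π = 2 ^ 2 / (2 * π) by ring, sqrt_div (by positivity), sqrt_sq zero_le_two]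
    ring
  simp_rw [integral_gaussianReal_eq_integral_smul one_ne_zero, hpdf, smul_eq_mul]
  rw [integral_comp_abs (f := fun x => (√(2 * π))⁻¹ * exp (-x ^ 2 / 2) * f x),
    ← integral_const_mul, hconst, ← integral_const_mul]
  congr 1 with x
  ring

lemma integral_comp_abs_gaussianReal_zero_sq {σ : ℝ} (hσ : 0 < σ) (f : ℝ → ℝ) :
    ∫ x, f |x| ∂gaussianReal 0 ⟨σ ^ 2, sq_nonneg σ⟩
      = √(2 / π) * ∫ ξ in Ioi 0, f (σ * ξ) * exp (-ξ ^ 2 / 2) := by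
  rw [gaussianReal_zero_sq_eq_map, (measurableEmbedding_mulLeft₀ hσ.ne').integral_map]
  simp_rw [abs_mul, abs_of_pos hσ]
  exact integral_comp_abs_gaussianReal_zero_one (fun x => f (σ * x))

lemma toReal_prod_gaussianReal_sign_consistent {ν : Measure ℝ} [SFinite ν] [NullSingletonClass ν]
    {σ : ℝ} (hσ : 0 < σ) :
    ((ν.prod (gaussianReal 0 ⟨σ ^ 2, sq_nonneg σ⟩)) {p | 0 < (p.1 + p.2) * p.1}).toReal
      = ∫ b, stdNormalCDF (|b| / σ) ∂ν := by
  have hcond : ∀ᵐ b ∂ν, gaussianReal 0 ⟨σ ^ 2, sq_nonneg σ⟩ {h | 0 < (b + h) * b}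
      = ENNReal.ofReal (stdNormalCDF (|b| / σ)) := by
    filter_upwards [Measure.ae_ne _ 0] with b hb
    rw [gaussianReal_zero_sign_consistent (mk_sq_ne_zero hσ.ne') hb, gaussianReal_zero_sq_Iic hσ]
  rw [Measure.prod_apply (by measurability)]
  change (∫⁻ b, gaussianReal 0 ⟨σ ^ 2, sq_nonneg σ⟩ {h | 0 < (b + h) * b} ∂ν).toReal = _
  rw [lintegral_congr_ae hcond, integral_eq_lintegral_of_nonneg_ae
    (ae_of_all _ fun _ => stdNormalCDF_nonneg _)
    (monotone_stdNormalCDF.measurable.comp (measurable_abs.div_const σ)).aestronglyMeasurable]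

/-- **Equation (2): sign-consistency probability under the DC criterion.**
If `B ~ N(0, ω²)` and `H ~ N(0, φ²)` are independent and `γ = φ² / (φ² + ω²)`, then
`Pr(sgn(B + H) = sgn B) = √(2/π) ∫₀^∞ Φ(√((1-γ)/γ) ξ) e^{-ξ²/2} dξ`. -/
theorem sign_consistency_probability {α : Type*} [MeasurableSpace α]
    (μ : Measure α) [IsProbabilityMeasure μ]
    (ω φ γ : ℝ) (hω : 0 < ω) (hφ : 0 < φ) (hγ : γ = φ ^ 2 / (φ ^ 2 + ω ^ 2))
    (B H : α → ℝ) (hB : Measurable B) (hH : Measurable H)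
    (hind : IndepFun B H μ)
    (hBlaw : μ.map B = gaussianReal 0 ⟨ω ^ 2, sq_nonneg ω⟩)
    (hHlaw : μ.map H = gaussianReal 0 ⟨φ ^ 2, sq_nonneg φ⟩) :
    (μ {a | 0 < (B a + H a) * B a}).toReal
      = Real.sqrt (2 / π) *
        ∫ ξ in Set.Ioi (0 : ℝ),
          stdNormalCDF (Real.sqrt ((1 - γ) / γ) * ξ) * Real.exp (-ξ ^ 2 / 2) := by
  have hjoint : μ.map (fun a => (B a, H a))
      = (gaussianReal 0 ⟨ω ^ 2, sq_nonneg ω⟩).prod (gaussianReal 0 ⟨φ ^ 2, sq_nonneg φ⟩) := by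
    rw [← hBlaw, ← hHlaw]
    exact (indepFun_iff_map_prod_eq_prod_map_map hB.aemeasurable hH.aemeasurable).1 hind
  have := nullSingletonClass_gaussianReal (μ := 0) (mk_sq_ne_zero hω.ne')
  have hratio : √((1 - γ) / γ) = ω / φ := by
    rw [show (1 - γ) / γ = (ω / φ) ^ 2 by rw [hγ]; field_simp; ring, sqrt_sq (by positivity)]
  calc (μ {a | 0 < (B a + H a) * B a}).toReal
      = ((μ.map fun a => (B a, H a)) {p | 0 < (p.1 + p.2) * p.1}).toReal := by
        rw [Measure.map_apply (hB.prodMk hH) (by measurability)]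
        rfl
    _ = ∫ b, stdNormalCDF (|b| / φ) ∂gaussianReal 0 ⟨ω ^ 2, sq_nonneg ω⟩ := by
        rw [hjoint, toReal_prod_gaussianReal_sign_consistent hφ]
    _ = _ := by
        rw [integral_comp_abs_gaussianReal_zero_sq hω (fun x => stdNormalCDF (x / φ)), hratio]
        simp_rw [mul_div_right_comm]
end
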